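/- arXiv:2602.09965 — 4 statements merged into one kernel-verified Lean document; each statement's English description precedes it below -/
import Mathlib

section
/- Let k ≥ 2 and ℓ ≥ 1 be integers and, for i ∈ {0,…,k−1}, let S_i^k be the set of vertices of ST_k^ℓ whose entry in position 0 equals i. Then S_i^k is an E^ℓ-set of ST_k^ℓ: every vertex v not in S_i^k has exactly ℓ neighbors in S_i^k, and, if ℓ > 1, any vertex adjacent to all ℓ of these neighbors equals v (v is their unique common neighbor). -/
/-- A string of length `k*l` over the alphabet `Fin k` in which every symbol
occurs exactly `l` times (an `l`-set permutation). -/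
def IsMSP (k l : ℕ) (v : Fin (k * l) → Fin k) : Prop :=
  ∀ a : Fin k, (Finset.univ.filter fun i => v i = a).card = l

/-- The vertex set of the star `l`-set transposition graph `ST_k^l`. -/
abbrev MSP (k l : ℕ) : Type := {v : Fin (k * l) → Fin k // IsMSP k l v}

/-- Star-transposition adjacency: `w` is obtained from `v` by transposing position `0`
with a position `i ≠ 0` whose entry differs from that of position `0`. -/
def STAdj (k l : ℕ) (v w : Fin (k * l) → Fin k) : Prop :=
  ∃ i j : Fin (k * l), (j : ℕ) = 0 ∧ i ≠ j ∧ v i ≠ v j ∧ w = v ∘ Equiv.swap j i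

/-- The star `l`-set transposition graph `ST_k^l`. -/
def STGraph (k l : ℕ) : SimpleGraph (MSP k l) :=
  SimpleGraph.fromRel fun v w => STAdj k l v.1 w.1

/-!
Let `v` have first entry `v₀ ≠ i`. Its neighbours with first entry `i` are exactly the strings
`v ∘ swap 0 p` with `v p = i`, and distinct such `p` give distinct strings, so there are `ℓ` of
them. If `u ≠ v` is adjacent to `v ∘ swap 0 p`, then `u` is obtained from it by swapping `0` with
some `q ≠ p`, so `u p = v₀`; but adjacency to `v ∘ swap 0 p'` for another such `p'` forces
`u p = i`.
-/

open Equiv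

section StarSwap

variable {ι α : Type*} [DecidableEq ι]

lemma injOn_comp_swap (v : ι → α) (z : ι) :
    Set.InjOn (fun p => v ∘ swap z p) {p | v p ≠ v z} := by
  intro p hp p' hp' h
  by_contra hne
  have hpz : p ≠ z := fun h => hp (h ▸ rfl)
  have := congrFun h p
  simp only [Function.comp_apply, swap_apply_right, swap_apply_of_ne_of_ne hpz hne] at this
  exact hp this.symm

lemma eq_of_comp_swap_comp_swap_eq {u v : ι → α} {z p p' q q' : ι} (hpp' : p ≠ p')
    (hvp : v p = v p') (hvz : v p ≠ v z)
    (hu : u = v ∘ swap z p ∘ swap z q) (hu' : u = v ∘ swap z p' ∘ swap z q') : u = v := by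
  have hpz : p ≠ z := fun h => hvz (h ▸ rfl)
  by_cases hqp : q = p
  · subst hqp
    funext x
    simp [hu]
  have hup : u p = v z := by
    simp [hu, swap_apply_of_ne_of_ne hpz (Ne.symm hqp)]
  have hup' : u p = v p := by
    by_cases hq'p : q' = p
    · simp [hu', hq'p, hvp]
    · simp [hu', swap_apply_of_ne_of_ne hpz (Ne.symm hq'p), swap_apply_of_ne_of_ne hpz hpp']
  exact (hvz (hup'.symm.trans hup)).elim

end StarSwap

section StarSetTransposition

variable {k l : ℕ}

lemma IsMSP.comp_perm {v : Fin (k * l) → Fin k} (hv : IsMSP k l v) (e : Perm (Fin (k * l))) :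
    IsMSP k l (v ∘ e) := by
  intro a
  have : (Finset.univ.filter fun x => (v ∘ e) x = a) =
      (Finset.univ.filter fun x => v x = a).map e.symm.toEmbedding := by
    ext x
    simp
  rw [this, Finset.card_map]
  exact hv a

lemma stAdj_iff_exists_comp_swap {z : Fin (k * l)} (hz : (z : ℕ) = 0)
    {v w : Fin (k * l) → Fin k} :
    STAdj k l v w ↔ ∃ p, v p ≠ v z ∧ w = v ∘ swap z p := by
  constructor
  · rintro ⟨p, j, hj, -, hvp, rfl⟩
    obtain rfl : j = z := Fin.ext (hj.trans hz.symm)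
    exact ⟨p, hvp, rfl⟩
  · rintro ⟨p, hvp, rfl⟩
    exact ⟨p, z, hz, fun h => hvp (h ▸ rfl), hvp, rfl⟩

lemma STAdj.symm {v w : Fin (k * l) → Fin k} (h : STAdj k l v w) : STAdj k l w v := by
  obtain ⟨p, j, hj, hpj, hvp, rfl⟩ := h
  refine ⟨p, j, hj, hpj, ?_, ?_⟩
  · simpa using Ne.symm hvp
  · funext x
    simp

lemma STGraph.adj_iff {v w : MSP k l} : (STGraph k l).Adj v w ↔ STAdj k l v.1 w.1 := by
  refine ⟨fun ⟨_, h⟩ => h.elim id STAdj.symm, fun h => ⟨?_, Or.inl h⟩⟩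
  rintro rfl
  obtain ⟨p, j, -, -, hvp, hw⟩ := h
  exact hvp (by simpa using (congrFun hw j).symm)

namespace MSP

def swapAt (v : MSP k l) (z p : Fin (k * l)) : MSP k l :=
  ⟨v.1 ∘ swap z p, v.2.comp_perm _⟩

lemma adj_iff_exists_swapAt {z : Fin (k * l)} (hz : (z : ℕ) = 0) {v w : MSP k l} :
    (STGraph k l).Adj v w ↔ ∃ p, v.1 p ≠ v.1 z ∧ w = v.swapAt z p := by
  simp only [STGraph.adj_iff, stAdj_iff_exists_comp_swap hz, swapAt, Subtype.ext_iff]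

lemma neighborSet_inter_eq_image {z : Fin (k * l)} (hz : (z : ℕ) = 0) {v : MSP k l} {i : Fin k}
    (hvz : v.1 z ≠ i) :
    (STGraph k l).neighborSet v ∩ {w | w.1 z = i} = v.swapAt z '' {p | v.1 p = i} := by
  ext w
  simp only [Set.mem_inter_iff, SimpleGraph.mem_neighborSet, adj_iff_exists_swapAt hz,
    Set.mem_ofPred_eq, Set.mem_image]
  constructor
  · rintro ⟨⟨p, -, rfl⟩, hwz⟩
    exact ⟨p, by simpa [swapAt] using hwz, rfl⟩
  · rintro ⟨p, hvp, rfl⟩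
    exact ⟨⟨p, hvp ▸ Ne.symm hvz, rfl⟩, by simpa [swapAt] using hvp⟩

lemma swapAt_injOn {v : MSP k l} {z : Fin (k * l)} {i : Fin k} (hvz : v.1 z ≠ i) :
    Set.InjOn (v.swapAt z) {p | v.1 p = i} := fun p hp p' hp' h =>
  injOn_comp_swap v.1 z (show v.1 p ≠ v.1 z from hp ▸ Ne.symm hvz)
    (show v.1 p' ≠ v.1 z from hp' ▸ Ne.symm hvz) (congrArg Subtype.val h)

lemma ncard_fiber (v : MSP k l) (i : Fin k) : {p | v.1 p = i}.ncard = l := by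
  rw [← Finset.coe_filter_univ, Set.ncard_coe_finset]
  exact v.2 i

lemma eq_of_forall_adj_swapAt {z : Fin (k * l)} (hz : (z : ℕ) = 0) {u v : MSP k l} {i : Fin k}
    (hvz : v.1 z ≠ i) (hl : 1 < l)
    (hu : ∀ s ∈ v.swapAt z '' {p | v.1 p = i}, (STGraph k l).Adj u s) : u = v := by
  obtain ⟨p, hp, p', hp', hpp'⟩ := (Set.one_lt_ncard).mp (v.ncard_fiber i ▸ hl)
  have swap_of_mem : ∀ p, v.1 p = i → ∃ q, u.1 = v.1 ∘ swap z p ∘ swap z q := fun p hp => by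
    obtain ⟨q, -, hq⟩ := (adj_iff_exists_swapAt hz).mp (hu _ ⟨p, hp, rfl⟩).symm
    exact ⟨q, congrArg Subtype.val hq⟩
  obtain ⟨q, hq⟩ := swap_of_mem p hp
  obtain ⟨q', hq'⟩ := swap_of_mem p' hp'
  exact Subtype.ext <| eq_of_comp_swap_comp_swap_eq hpp' (hp.trans hp'.symm)
    (hp ▸ Ne.symm hvz) hq hq'

end MSP

end StarSetTransposition

/-- for `k ≥ 2`, `l ≥ 1`, the set `S_i^k` of vertices with first entry `i`
is an E^l-set of `ST_k^l`: every vertex outside it has exactly `l` neighbors in it, and if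
`l > 1` then it is the unique common neighbor of these `l` vertices. -/
theorem stmt2 (k l : ℕ) (hk : 2 ≤ k) (hl : 1 ≤ l) (i : Fin k)
    (S : Set (MSP k l))
    (hS : S = {v : MSP k l | v.1 ⟨0, Nat.mul_pos (by omega) (by omega)⟩ = i}) :
    ∀ v : MSP k l, v ∉ S →
      ((STGraph k l).neighborSet v ∩ S).ncard = l ∧
      (1 < l → ∀ u : MSP k l,
        (∀ s ∈ (STGraph k l).neighborSet v ∩ S, (STGraph k l).Adj u s) → u = v) := by
  subst hS
  intro v hvz
  rw [MSP.neighborSet_inter_eq_image rfl hvz]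
  exact ⟨by rw [(MSP.swapAt_injOn hvz).ncard_image, MSP.ncard_fiber],
    fun hl1 _ hu => MSP.eq_of_forall_adj_swapAt rfl hvz hl1 hu⟩
end

section
/- Let k ≥ 2 and, for i ∈ {1,…,2k−1}, let Σ_i^k be the set of vertices v = v_0v_1⋯v_{2k−1} of ST_k^2 with v_0 = v_i. Then: (a) the sets Σ_1^k,…,Σ_{2k−1}^k form a partition of the vertex set of ST_k^2 (every vertex has v_0 = v_i for exactly one i ∈ {1,…,2k−1}); and (b) each Σ_i^k is an E-set of ST_k^2, i.e., Σ_i^k is an independent set and every vertex not in Σ_i^k has exactly one neighbor in Σ_i^k. -/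
lemma isMSP_comp {k l : ℕ} {v : Fin (k*l) → Fin k} (h : IsMSP k l v)
    (e : Equiv.Perm (Fin (k*l))) : IsMSP k l (v ∘ e) := by
  intro a
  have : (Finset.univ.filter fun i => (v ∘ e) i = a).card
      = (Finset.univ.filter fun i => v i = a).card := by
    apply Finset.card_bij' (fun i _ => e i) (fun i _ => e.symm i) <;>
      simp [Function.comp]
  rw [this, h a]

lemma pair_unique {k : ℕ} (v : MSP k 2) (i : Fin (k*2)) :
    ∃! j, j ≠ i ∧ v.1 j = v.1 i := by
  obtain ⟨x, y, hxy, hset⟩ := Finset.card_eq_two.mp (v.2 (v.1 i))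
  have mem : ∀ j, v.1 j = v.1 i ↔ j = x ∨ j = y := by
    intro j
    constructor
    · intro hj
      have : j ∈ Finset.univ.filter (fun j => v.1 j = v.1 i) := by
        simp [hj]
      rw [hset] at this; simpa using this
    · intro hj
      have : j ∈ ({x, y} : Finset _) := by simpa using hj
      rw [← hset] at this; simpa using this
  have hi : i = x ∨ i = y := (mem i).mp rfl
  rcases hi with rfl | rfl
  · refine ⟨y, ⟨Ne.symm hxy, (mem y).mpr (Or.inr rfl)⟩, ?_⟩
    rintro j ⟨hj1, hj2⟩
    rcases (mem j).mp hj2 with rfl | rfl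
    · exact absurd rfl hj1
    · rfl
  · refine ⟨x, ⟨hxy, (mem x).mpr (Or.inl rfl)⟩, ?_⟩
    rintro j ⟨hj1, hj2⟩
    rcases (mem j).mp hj2 with rfl | rfl
    · rfl
    · exact absurd rfl hj1

lemma adj_form {k : ℕ} {z0 : Fin (k*2)} (hz : (z0:ℕ) = 0)
    {v w : MSP k 2} (h : (STGraph k 2).Adj v w) :
    ∃ a : Fin (k*2), a ≠ z0 ∧ v.1 a ≠ v.1 z0 ∧ w.1 = v.1 ∘ Equiv.swap z0 a := by
  rw [STGraph, SimpleGraph.fromRel_adj] at h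
  obtain ⟨hne, h | h⟩ := h
  · obtain ⟨a, j, hj0, haj, hval, heq⟩ := h
    have hjz : j = z0 := Fin.ext (by rw [hj0, hz])
    subst hjz
    exact ⟨a, haj, hval, heq⟩
  · obtain ⟨a, j, hj0, haj, hval, heq⟩ := h
    have hjz : j = z0 := Fin.ext (by rw [hj0, hz])
    subst hjz
    refine ⟨a, haj, ?_, ?_⟩
    · have h1 : v.1 j = w.1 a := by
        rw [heq]; simp [Function.comp, Equiv.swap_apply_left]
      have h2 : v.1 a = w.1 j := by
        rw [heq]; simp [Function.comp, Equiv.swap_apply_right]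
      rw [h1, h2]; exact fun hh => hval hh.symm
    · funext x
      rw [heq]
      simp [Function.comp, Equiv.swap_apply_self]

/-- the sets `Σ_i^k = {v : v_0 = v_i}`, `i ∈ {1,...,2k-1}`, partition the
vertex set of `ST_k^2`, and each is an E-set: independent, with every outside vertex having
exactly one neighbor inside. -/
theorem stmt10 (k : ℕ) (hk : 2 ≤ k)
    (Sig : Fin (k * 2) → Set (MSP k 2))
    (hSig : ∀ i : Fin (k * 2),
      Sig i = {v : MSP k 2 | v.1 ⟨0, by omega⟩ = v.1 i}) :
    (∀ v : MSP k 2, ∃! i : Fin (k * 2), (i : ℕ) ≠ 0 ∧ v ∈ Sig i) ∧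
    (∀ i : Fin (k * 2), (i : ℕ) ≠ 0 →
      (∀ v ∈ Sig i, ∀ w ∈ Sig i, ¬ (STGraph k 2).Adj v w) ∧
      (∀ v : MSP k 2, v ∉ Sig i →
        ((STGraph k 2).neighborSet v ∩ Sig i).ncard = 1)) := by
  set z0 : Fin (k*2) := ⟨0, by omega⟩ with hz0
  have hz : (z0 : ℕ) = 0 := rfl
  constructor
  · intro v
    obtain ⟨j, ⟨hj1, hj2⟩, huniq⟩ := pair_unique v z0
    refine ⟨j, ⟨fun h => hj1 (Fin.ext (by rw [h, hz])), ?_⟩, ?_⟩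
    · rw [hSig]; exact hj2.symm
    · rintro y ⟨hy1, hy2⟩
      apply huniq
      refine ⟨fun h => hy1 (by rw [h, hz]), ?_⟩
      rw [hSig] at hy2
      exact hy2.symm
  · intro i hi
    have hiz : i ≠ z0 := fun h => hi (by rw [h, hz])
    constructor
    · intro v hv w hw hadj
      rw [hSig] at hv hw
      obtain ⟨a, ha0, hva, heq⟩ := adj_form hz hadj
      by_cases hia : i = a
      · exact hva (hia ▸ hv.symm)
      · have hwz : w.1 z0 = v.1 a := by rw [heq]; simp
        have hwi : w.1 i = v.1 i := by
          rw [heq]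
          simp [Function.comp, Equiv.swap_apply_of_ne_of_ne hiz (Ne.symm (fun h => hia h.symm))]
        have : v.1 a = v.1 i := by rw [← hwz, ← hwi]; exact hw
        exact hva (this.trans hv.symm)
    · intro v hv
      rw [hSig] at hv
      have hviz : v.1 z0 ≠ v.1 i := hv
      obtain ⟨j0, ⟨hj0i, hj0v⟩, huq⟩ := pair_unique v i
      have hj0z : j0 ≠ z0 := fun h => hviz (h ▸ hj0v)
      set w0 : MSP k 2 := ⟨v.1 ∘ Equiv.swap z0 j0, isMSP_comp v.2 _⟩ with hw0
      have hset : (STGraph k 2).neighborSet v ∩ Sig i = {w0} := by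
        ext w
        simp only [Set.mem_inter_iff, SimpleGraph.mem_neighborSet, hSig,
          Set.mem_setOf_eq, Set.mem_singleton_iff]
        constructor
        · rintro ⟨hadj, hwS⟩
          obtain ⟨a, ha0, hva, heq⟩ := adj_form hz hadj
          have hwz : w.1 z0 = v.1 a := by rw [heq]; simp
          have hai : a ≠ i := by
            rintro rfl
            have hwi : w.1 a = v.1 z0 := by
              rw [heq]; simp [Function.comp, Equiv.swap_apply_of_ne_of_ne]
            exact hva ((hwz.symm.trans hwS).trans hwi)
          have hwi : w.1 i = v.1 i := by
            rw [heq]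
            simp [Function.comp,
              Equiv.swap_apply_of_ne_of_ne hiz (Ne.symm hai)]
          have hvai : v.1 a = v.1 i := by rw [← hwz, ← hwi]; exact hwS
          have : a = j0 := huq a ⟨hai, hvai⟩
          subst this
          exact Subtype.ext heq
        · rintro rfl
          refine ⟨?_, ?_⟩
          · rw [STGraph, SimpleGraph.fromRel_adj]
            refine ⟨?_, Or.inl ⟨j0, z0, hz, hj0z, ?_, rfl⟩⟩
            · intro h
              apply hviz
              have : v.1 z0 = w0.1 z0 := by rw [← h]
              rw [this]
              show v.1 (Equiv.swap z0 j0 z0) = v.1 i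
              rw [Equiv.swap_apply_left]
              exact hj0v
            · rw [hj0v]; exact fun h => hviz h.symm
          · show v.1 (Equiv.swap z0 j0 z0) = v.1 (Equiv.swap z0 j0 i)
            rw [Equiv.swap_apply_left,
              Equiv.swap_apply_of_ne_of_ne hiz (fun h => hj0i h.symm)]
            exact hj0v
      rw [hset]
      exact Set.ncard_singleton w0
end

section
/- Let d ≥ 1 and let G be a d-regular simple graph with an efficient coloring using a color set C of d+1 colors. Then for each color c ∈ C, the vertex color class W_c = { v : v has color c } is an E-set of G: W_c is an independent set, and every vertex not in W_c has exactly one neighbor in W_c. -/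
/-- in a `d`-regular graph with an efficient coloring using `d+1` colors,
each vertex color class is an E-set: independent, and every vertex outside it has exactly
one neighbor in it. -/
theorem stmt15 {V α : Type*} (G : SimpleGraph V) (d : ℕ) (hd : 1 ≤ d)
    (C : Set α) (hC : C.ncard = d + 1)
    (hreg : ∀ v : V, (G.neighborSet v).ncard = d)
    (cv : V → α) (ce : V → V → α)
    (hcvC : ∀ v, cv v ∈ C)
    (hceC : ∀ v w, G.Adj v w → ce v w ∈ C)
    (hsym : ∀ v w, ce v w = ce w v)
    (h1 : ∀ v w, G.Adj v w → cv v ≠ cv w)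
    (h2 : ∀ u v w, G.Adj u v → G.Adj u w → v ≠ w → ce u v ≠ ce u w)
    (h3 : ∀ v w, G.Adj v w → cv v ≠ ce v w)
    (heff : ∀ v : V, Set.InjOn cv (insert v (G.neighborSet v))) :
    ∀ c ∈ C,
      (∀ v ∈ {x : V | cv x = c}, ∀ w ∈ {x : V | cv x = c}, ¬ G.Adj v w) ∧
      (∀ v : V, v ∉ {x : V | cv x = c} →
        (G.neighborSet v ∩ {x : V | cv x = c}).ncard = 1) := by
  intro c hc
  refine ⟨fun v hv w hw hadj => h1 v w hadj (hv.trans hw.symm), ?_⟩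
  intro v hv
  have hCfin : C.Finite := by
    rcases Set.finite_or_infinite C with h | h
    · exact h
    · have := h.ncard; omega
  have hNfin : (G.neighborSet v).Finite := by
    rcases Set.finite_or_infinite (G.neighborSet v) with h | h
    · exact h
    · have := h.ncard; have := hreg v; omega
  have hvN : v ∉ G.neighborSet v := fun h => G.irrefl h
  have hclosed : (insert v (G.neighborSet v)).ncard = d + 1 := by
    rw [Set.ncard_insert_of_notMem hvN hNfin, hreg v]
  have hinj := heff v
  have himg : cv '' (insert v (G.neighborSet v)) = C := by
    apply Set.eq_of_subset_of_ncard_le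
    · rintro _ ⟨x, _, rfl⟩; exact hcvC x
    · rw [Set.ncard_image_of_injOn hinj, hclosed, hC]
    · exact hCfin
  obtain ⟨w, hwN, hwc⟩ : ∃ w ∈ insert v (G.neighborSet v), cv w = c := by
    have : c ∈ cv '' (insert v (G.neighborSet v)) := himg ▸ hc
    exact this
  have hwne : w ≠ v := fun h => hv (by simpa [h] using hwc)
  have hwNb : w ∈ G.neighborSet v := by
    rcases hwN with h | h
    · exact absurd h hwne
    · exact h
  have : G.neighborSet v ∩ {x : V | cv x = c} = {w} := by
    ext x
    constructor
    · rintro ⟨hx1, hx2⟩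
      exact hinj (Set.mem_insert_of_mem _ hx1) hwN (hx2.trans hwc.symm)
    · rintro rfl
      exact ⟨hwNb, hwc⟩
  rw [this, Set.ncard_singleton]
end

section
/- Let k ≥ 2. For each j ∈ {0,…,k}, define a map κ_j from the vertices of ST_k^2 to the vertices of ST_{k+1}^2 by κ_j(v_0v_1⋯v_{2k−1}) = w_0w_1⋯w_{2k−1} j j, where w_i = (v_i + j + 1) mod (k+1) for 0 ≤ i ≤ 2k−1. Then each κ_j is a well-defined injective map whose image induces a subgraph of ST_{k+1}^2 isomorphic to ST_k^2 via κ_j (u and v are adjacent in ST_k^2 if and only if κ_j(u) and κ_j(v) are adjacent in ST_{k+1}^2), and the images of κ_0,…,κ_k are pairwise disjoint. -/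
/-- The map `κ_j : V(ST_k^2) → V(ST_{k+1}^2)`,
`κ_j(v_0 ⋯ v_{2k-1}) = w_0 ⋯ w_{2k-1} j j` with `w_i = (v_i + j + 1) mod (k+1)`. -/
def kappa (k : ℕ) (j : Fin (k + 1)) (v : Fin (k * 2) → Fin k) :
    Fin ((k + 1) * 2) → Fin (k + 1) :=
  fun i => if h : (i : ℕ) < k * 2 then Fin.ofNat (k + 1) ((v ⟨i, h⟩ : ℕ) + (j : ℕ) + 1 : ℕ) else j

/-! On the first `2k` positions `κ_j` applies the symbol map `b ↦ b + j + 1`, an injection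
`Fin k → Fin (k + 1)` whose image misses exactly `j`; the last two positions hold `j`. Hence the
symbol counts of `κ_j v` are those of `v` transported along this map plus two copies of `j`, a star
transposition of `κ_j v` never touches the trailing `j`s and so comes from one of `v`, and the
trailing `j` tells the images of different `κ_j` apart. -/

open Finset

theorem card_filter_val_not_lt {N n : ℕ} (hn : n ≤ N) : #{t : Fin N | ¬ (t : ℕ) < n} = N - n := by
  have := card_filter_add_card_filter_not (s := univ) (fun t : Fin N => (t : ℕ) < n)
  rw [Fin.card_filter_val_lt, card_univ, Fintype.card_fin] at this
  omega

theorem card_filter_dite_lt_eq {β : Type*} [DecidableEq β] {N n : ℕ} (hn : n ≤ N)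
    (g : Fin n → β) (c a : β) :
    #{t : Fin N | (if h : (t : ℕ) < n then g ⟨t, h⟩ else c) = a} =
        #{i | g i = a} + if c = a then N - n else 0 := by
  rw [← card_filter_add_card_filter_not (fun t : Fin N => (t : ℕ) < n), filter_filter,
    filter_filter]
  congr 1
  · rw [← card_map (Fin.castLEEmb hn)]
    congr 1
    ext t
    simp only [mem_filter, mem_univ, true_and, mem_map, Fin.castLEEmb_apply]
    constructor
    · rintro ⟨h, ht⟩
      exact ⟨⟨t, ht⟩, by simpa [ht] using h, rfl⟩
    · rintro ⟨i, hi, rfl⟩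
      simpa using hi
  · split_ifs with hc
    · subst hc
      rw [← card_filter_val_not_lt hn]
      congr 1
      ext t
      simp +contextual
    · rw [card_eq_zero, filter_eq_empty_iff]
      intro t _ ⟨h, ht⟩
      exact hc (by simpa [ht] using h)

section Shift

variable {k : ℕ}

def shiftSymbol (j : Fin (k + 1)) (b : Fin k) : Fin (k + 1) :=
  b.castSucc + j + 1

theorem shiftSymbol_injective (j : Fin (k + 1)) : Function.Injective (shiftSymbol j) :=
  (add_left_injective 1).comp ((add_left_injective j).comp (Fin.castSucc_injective k))

theorem shiftSymbol_ne (j : Fin (k + 1)) (b : Fin k) : shiftSymbol j b ≠ j := by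
  intro h
  rw [shiftSymbol, add_right_comm, add_eq_right, ← Fin.last_add_one] at h
  exact Fin.castSucc_ne_last b (add_right_cancel h)

theorem exists_shiftSymbol_eq {j a : Fin (k + 1)} (ha : a ≠ j) : ∃ b, shiftSymbol j b = a := by
  have : a - 1 - j ≠ Fin.last k := by
    intro h
    rw [sub_eq_iff_eq_add, sub_eq_iff_eq_add, add_right_comm, Fin.last_add_one, zero_add] at h
    exact ha h
  obtain ⟨b, hb⟩ := Fin.exists_castSucc_eq.2 this
  exact ⟨b, by rw [shiftSymbol, hb]; abel⟩

end Shift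

section Kappa

variable {k : ℕ} {j : Fin (k + 1)}

theorem kappa_apply (v : Fin (k * 2) → Fin k) (t : Fin ((k + 1) * 2)) :
    kappa k j v t = if h : (t : ℕ) < k * 2 then shiftSymbol j (v ⟨t, h⟩) else j := by
  unfold kappa
  split
  · ext
    simp [shiftSymbol, Fin.val_add]
  · rfl

theorem kappa_castLE (h : k * 2 ≤ (k + 1) * 2) (v : Fin (k * 2) → Fin k) (i : Fin (k * 2)) :
    kappa k j v (Fin.castLE h i) = shiftSymbol j (v i) := by
  simp [kappa_apply]

theorem kappa_of_le (v : Fin (k * 2) → Fin k) {t : Fin ((k + 1) * 2)} (ht : k * 2 ≤ t) :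
    kappa k j v t = j := by
  simp [kappa_apply, ht.not_gt]

theorem kappa_eq_self_iff (v : Fin (k * 2) → Fin k) (t : Fin ((k + 1) * 2)) :
    kappa k j v t = j ↔ k * 2 ≤ t := by
  rw [kappa_apply]
  split_ifs with ht
  · exact iff_of_false (shiftSymbol_ne j _) (by omega)
  · exact iff_of_true rfl (by omega)

theorem kappa_injective : Function.Injective (kappa k j) := by
  intro v w h
  have hle : k * 2 ≤ (k + 1) * 2 := by omega
  funext i
  exact shiftSymbol_injective j <| by
    simpa only [kappa_castLE hle] using congrFun h (Fin.castLE hle i)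

theorem kappa_comp_swap (h : k * 2 ≤ (k + 1) * 2) (v : Fin (k * 2) → Fin k) (a b : Fin (k * 2)) :
    kappa k j (v ∘ Equiv.swap a b) =
      kappa k j v ∘ Equiv.swap (Fin.castLE h a) (Fin.castLE h b) := by
  funext t
  by_cases ht : (t : ℕ) < k * 2
  · obtain ⟨i, rfl⟩ : ∃ i, Fin.castLE h i = t := ⟨⟨t, ht⟩, rfl⟩
    simp only [Function.comp_apply, (Fin.castLE_injective h).swap_apply, kappa_castLE]
  · have hne : ∀ c : Fin (k * 2), t ≠ Fin.castLE h c := fun c hc => ht (hc ▸ c.isLt)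
    rw [Function.comp_apply, Equiv.swap_apply_of_ne_of_ne (hne a) (hne b),
      kappa_of_le _ (not_lt.1 ht), kappa_of_le _ (not_lt.1 ht)]

theorem isMSP_kappa {v : Fin (k * 2) → Fin k} (hv : IsMSP k 2 v) :
    IsMSP (k + 1) 2 (kappa k j v) := by
  intro a
  simp only [kappa_apply]
  rw [card_filter_dite_lt_eq (by omega) (fun i => shiftSymbol j (v i)) j a]
  by_cases ha : a = j
  · subst ha
    simp only [shiftSymbol_ne, filter_false, card_empty, if_true]
    omega
  · obtain ⟨b, rfl⟩ := exists_shiftSymbol_eq ha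
    simp only [(shiftSymbol_injective j).eq_iff, hv b, if_neg (Ne.symm ha)]

theorem stAdj_kappa_iff {v w : Fin (k * 2) → Fin k} :
    STAdj (k + 1) 2 (kappa k j v) (kappa k j w) ↔ STAdj k 2 v w := by
  have hle : k * 2 ≤ (k + 1) * 2 := by omega
  constructor
  · rintro ⟨I, I0, hI0, hne, hv, hw⟩
    -- if `I` held a trailing `j`, the swap would make `I0` trailing too, so both would hold `j`
    have hI : (I : ℕ) < k * 2 := by
      by_contra hI
      have hwI0 := congrFun hw I0
      rw [Function.comp_apply, Equiv.swap_apply_left, kappa_of_le v (not_lt.1 hI),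
        kappa_eq_self_iff] at hwI0
      exact hv (by rw [kappa_of_le v (not_lt.1 hI), kappa_of_le v hwI0])
    obtain ⟨i, rfl⟩ : ∃ i, Fin.castLE hle i = I := ⟨⟨I, hI⟩, rfl⟩
    obtain ⟨i0, rfl⟩ : ∃ i0, Fin.castLE hle i0 = I0 := ⟨⟨I0, by omega⟩, rfl⟩
    refine ⟨i, i0, hI0, fun h => hne (h ▸ rfl), fun h => hv ?_, kappa_injective (j := j) ?_⟩
    · rw [kappa_castLE, kappa_castLE, h]
    · rw [hw, kappa_comp_swap hle]
  · rintro ⟨i, i0, hi0, hne, hv, rfl⟩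
    refine ⟨Fin.castLE hle i, Fin.castLE hle i0, hi0, (Fin.castLE_injective hle).ne hne, ?_,
      kappa_comp_swap hle v i0 i⟩
    rw [kappa_castLE, kappa_castLE]
    exact (shiftSymbol_injective j).ne hv

theorem stGraph_adj_kappa_iff (v w : MSP k 2) (hv : IsMSP (k + 1) 2 (kappa k j v.1))
    (hw : IsMSP (k + 1) 2 (kappa k j w.1)) :
    (STGraph (k + 1) 2).Adj ⟨kappa k j v.1, hv⟩ ⟨kappa k j w.1, hw⟩ ↔ (STGraph k 2).Adj v w := by
  simp only [STGraph, SimpleGraph.fromRel_adj, ne_eq, kappa_injective.eq_iff,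
    stAdj_kappa_iff, Subtype.ext_iff]

end Kappa

theorem kappa_ne_kappa {k : ℕ} {j j' : Fin (k + 1)} (hj : j ≠ j') (v w : Fin (k * 2) → Fin k) :
    kappa k j v ≠ kappa k j' w := fun h =>
  hj (by simpa [kappa_apply] using congrFun h ⟨k * 2, by omega⟩)

theorem stmt18_general (k : ℕ) (j : Fin (k + 1)) :
    (∀ v : Fin (k * 2) → Fin k, IsMSP k 2 v → IsMSP (k + 1) 2 (kappa k j v)) ∧
    (∀ v w : Fin (k * 2) → Fin k, IsMSP k 2 v → IsMSP k 2 w →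
      kappa k j v = kappa k j w → v = w) ∧
    (∀ v w : MSP k 2,
      ∀ (hv : IsMSP (k + 1) 2 (kappa k j v.1)) (hw : IsMSP (k + 1) 2 (kappa k j w.1)),
      ((STGraph k 2).Adj v w ↔
        (STGraph (k + 1) 2).Adj ⟨kappa k j v.1, hv⟩ ⟨kappa k j w.1, hw⟩)) ∧
    (∀ j' : Fin (k + 1), j ≠ j' → ∀ v w : Fin (k * 2) → Fin k,
      IsMSP k 2 v → IsMSP k 2 w → kappa k j v ≠ kappa k j' w) :=
  ⟨fun _ hv => isMSP_kappa hv,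
    fun _ _ _ _ h => kappa_injective h,
    fun v w hv hw => (stGraph_adj_kappa_iff v w hv hw).symm,
    fun _ hj v w _ _ => kappa_ne_kappa hj v w⟩

/-- each `κ_j` is a well-defined injective map from the vertices of `ST_k^2`
to those of `ST_{k+1}^2`, its image induces a subgraph isomorphic to `ST_k^2` via `κ_j`,
and the images of `κ_0, ..., κ_k` are pairwise disjoint. -/
theorem stmt18 (k : ℕ) (hk : 2 ≤ k) (j : Fin (k + 1)) :
    (∀ v : Fin (k * 2) → Fin k, IsMSP k 2 v → IsMSP (k + 1) 2 (kappa k j v)) ∧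
    (∀ v w : Fin (k * 2) → Fin k, IsMSP k 2 v → IsMSP k 2 w →
      kappa k j v = kappa k j w → v = w) ∧
    (∀ v w : MSP k 2,
      ∀ (hv : IsMSP (k + 1) 2 (kappa k j v.1)) (hw : IsMSP (k + 1) 2 (kappa k j w.1)),
      ((STGraph k 2).Adj v w ↔
        (STGraph (k + 1) 2).Adj ⟨kappa k j v.1, hv⟩ ⟨kappa k j w.1, hw⟩)) ∧
    (∀ j' : Fin (k + 1), j ≠ j' → ∀ v w : Fin (k * 2) → Fin k,
      IsMSP k 2 v → IsMSP k 2 w → kappa k j v ≠ kappa k j' w) :=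
  stmt18_general k j
end
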